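/- The self-adjoint equation E₃ is solved by the square of the hypergeometric function F(1/2,1/2,1;x): let f(x) = Σₙ₌₀^∞ ((∏ₖ₌₀^{n−1}(1/2+k)) / n!)² xⁿ (the Gauss hypergeometric series F(1/2,1/2,1;x)) and u(x) = f(x)². Then for every complex x with |x| < 1, x²(x−1)²u'''(x) + 3x(x−1)(2x−1)u''(x) + (7x²−7x+1)u'(x) + (x − 1/2)u(x) = 0. -/

import Mathlib

/-!
STATEMENT 16: The self-adjoint equation E₃ is solved by the square of the
hypergeometric function F(1/2,1/2,1;x): with u = F(1/2,1/2,1;·)², for |x| < 1,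
x²(x−1)²u''' + 3x(x−1)(2x−1)u'' + (7x²−7x+1)u' + (x−1/2)u = 0.
-/

/-- The Gauss hypergeometric series F(1/2,1/2,1;x). -/
noncomputable def hypF (x : ℂ) : ℂ :=
  ∑' n : ℕ, ((∏ k ∈ Finset.range n, ((1 : ℂ)/2 + k)) / (n.factorial : ℂ))^2 * x^n

/-- The square of F(1/2,1/2,1;x). -/
noncomputable def uSq (x : ℂ) : ℂ := (hypF x)^2

/-!
Let `f = F(1/2, 1/2; 1)`. A power series `∑ aₙ xⁿ` with polynomially growing coefficients solves
Gauss's equation `x(1 - x) y'' + (γ - (α + β + 1) x) y' - α β y = 0` on the unit disc when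
`(n + 1)(n + γ) aₙ₊₁ = (n + α)(n + β) aₙ`; the coefficients of `f` satisfy this with
`α = β = 1/2, γ = 1`, and those of `f'` with `α = β = 3/2, γ = 2`. Writing `u = f²`, so that
`u' = 2ff'`, `u'' = 2f'² + 2ff''` and `u''' = 6f'f'' + 2ff'''`, the operator of `E₃` applied to `u`
is `-2x(x - 1) f` times the equation of `f'` minus `6x(x - 1) f' + 2(2x - 1) f` times that of `f`.
-/

open Finset Set Filter

section PowerSeries

variable {𝕜 : Type*} [RCLike 𝕜]

noncomputable def seriesSum (a : ℕ → 𝕜) (x : 𝕜) : 𝕜 := ∑' n, a n * x ^ n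

def derivCoeff (a : ℕ → 𝕜) (n : ℕ) : 𝕜 := (n + 1) * a (n + 1)

def PolyGrowth (a : ℕ → 𝕜) : Prop := ∃ C : ℝ, ∃ p : ℕ, ∀ n, ‖a n‖ ≤ C * ((n : ℝ) + 1) ^ p

theorem summable_add_one_pow_mul_geometric (p : ℕ) {r : ℝ} (hr₀ : 0 ≤ r) (hr₁ : r < 1) :
    Summable fun n : ℕ => ((n : ℝ) + 1) ^ p * r ^ n := by
  refine (summable_descFactorial_mul_geometric_of_norm_lt_one p
    (by rwa [Real.norm_of_nonneg hr₀])).of_nonneg_of_le (fun n => by positivity) fun n => ?_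
  gcongr
  have := Nat.pow_sub_le_descFactorial (n + p) p
  rw [Nat.add_right_comm, Nat.add_sub_cancel] at this
  exact_mod_cast this

namespace PolyGrowth

variable {a : ℕ → 𝕜}

theorem summable_norm_mul_geometric (ha : PolyGrowth a) {r : ℝ} (hr₀ : 0 ≤ r) (hr₁ : r < 1) :
    Summable fun n => ‖a n‖ * r ^ n := by
  obtain ⟨C, p, hC⟩ := ha
  refine ((summable_add_one_pow_mul_geometric p hr₀ hr₁).mul_left C).of_nonneg_of_le
    (fun n => by positivity) fun n => ?_
  rw [← mul_assoc]
  gcongr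
  exact hC n

theorem summable (ha : PolyGrowth a) {x : 𝕜} (hx : ‖x‖ < 1) :
    Summable fun n => a n * x ^ n :=
  .of_norm <| by simpa only [norm_mul, norm_pow] using
    ha.summable_norm_mul_geometric (norm_nonneg x) hx

theorem derivCoeff (ha : PolyGrowth a) : PolyGrowth (derivCoeff a) := by
  obtain ⟨C, p, hC⟩ := ha
  have hC₀ : 0 ≤ C := by simpa using (norm_nonneg _).trans (hC 0)
  refine ⟨2 ^ p * C, p + 1, fun n => ?_⟩
  have hn : ((n + 1 : ℕ) : ℝ) + 1 ≤ 2 * ((n : ℝ) + 1) := by push_cast; linarith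
  calc ‖_root_.derivCoeff a n‖ = ((n : ℝ) + 1) * ‖a (n + 1)‖ := by
        rw [_root_.derivCoeff, norm_mul, ← Nat.cast_add_one, RCLike.norm_natCast]
        push_cast; ring
    _ ≤ ((n : ℝ) + 1) * (C * (2 * ((n : ℝ) + 1)) ^ p) := by
        gcongr
        exact (hC _).trans (by gcongr)
    _ = 2 ^ p * C * ((n : ℝ) + 1) ^ (p + 1) := by rw [mul_pow]; ring

theorem hasDerivAt_seriesSum (ha : PolyGrowth a) {x : 𝕜} (hx : ‖x‖ < 1) :
    HasDerivAt (seriesSum a) (seriesSum (_root_.derivCoeff a) x) x := by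
  obtain ⟨r, hxr, hr₁⟩ := exists_between hx
  have hr₀ : 0 ≤ r := (norm_nonneg x).trans hxr.le
  have hbound : Summable fun n => ‖a n‖ * (n * r ^ (n - 1)) := by
    refine (summable_nat_add_iff 1).mp
      ((ha.derivCoeff.summable_norm_mul_geometric hr₀ hr₁).congr fun n => ?_)
    rw [_root_.derivCoeff, norm_mul, ← Nat.cast_add_one, RCLike.norm_natCast]
    simp only [Nat.add_sub_cancel]
    ring
  have key := hasDerivAt_tsum_of_isPreconnected hbound Metric.isOpen_ball
    (convex_ball (0 : 𝕜) r).isPreconnected (g := fun n y => a n * y ^ n)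
    (fun n y _ => (hasDerivAt_pow n y).const_mul (a n))
    (fun n y hy => by
      rw [mem_ball_zero_iff] at hy
      rw [norm_mul, norm_mul, norm_pow, RCLike.norm_natCast]
      gcongr)
    (Metric.mem_ball_self ((norm_nonneg x).trans_lt hxr)) (ha.summable (by simp))
    (mem_ball_zero_iff.mpr hxr)
  suffices h : ∑' n, a n * (n * x ^ (n - 1)) = seriesSum (_root_.derivCoeff a) x from h ▸ key
  rw [tsum_eq_zero_add' ?_]
  · simp [seriesSum, _root_.derivCoeff, mul_assoc, mul_left_comm]
  · refine (ha.derivCoeff.summable hx).congr fun n => ?_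
    simp [_root_.derivCoeff, mul_assoc, mul_left_comm]

end PolyGrowth

end PowerSeries

section HypergeometricEquation

variable {𝕜 : Type*} [RCLike 𝕜]

theorem hasSum_mul_pow_of_hasSum_succ {b c : ℕ → 𝕜} {x s : 𝕜}
    (hc : HasSum (fun n => c n * x ^ n) s) (hb : ∀ n, b (n + 1) = c n) (hb₀ : b 0 = 0) :
    HasSum (fun n => b n * x ^ n) (x * s) := by
  have hterm : (fun n => x * (c n * x ^ n)) = fun n => b (n + 1) * x ^ (n + 1) := by
    funext n
    rw [hb, pow_succ]
    ring
  have hshift := HasSum.zero_add (f := fun n => b n * x ^ n) (hterm ▸ hc.mul_left x)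
  rwa [hb₀, zero_mul, zero_add] at hshift

theorem derivCoeff_recurrence {a : ℕ → 𝕜} {α β γ : 𝕜}
    (hrec : ∀ n : ℕ, (n + 1) * (n + γ) * a (n + 1) = (n + α) * (n + β) * a n) (n : ℕ) :
    (n + 1) * (n + (γ + 1)) * derivCoeff a (n + 1)
      = (n + (α + 1)) * (n + (β + 1)) * derivCoeff a n := by
  have h := hrec (n + 1)
  simp only [derivCoeff, Nat.cast_add_one] at h ⊢
  linear_combination (n + 1 : 𝕜) * h

-- The recurrence says that the coefficient of `x ^ n` on the left-hand side vanishes.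
theorem seriesSum_hypergeometric_ode {a : ℕ → 𝕜} {α β γ : 𝕜} (ha : PolyGrowth a)
    (hrec : ∀ n : ℕ, (n + 1) * (n + γ) * a (n + 1) = (n + α) * (n + β) * a n)
    {x : 𝕜} (hx : ‖x‖ < 1) :
    x * (1 - x) * seriesSum (derivCoeff (derivCoeff a)) x
      + (γ - (α + β + 1) * x) * seriesSum (derivCoeff a) x - α * β * seriesSum a x = 0 := by
  have h₀ := (ha.summable hx).hasSum
  have h₁ := (ha.derivCoeff.summable hx).hasSum
  have h₂ := (ha.derivCoeff.derivCoeff.summable hx).hasSum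
  have hx₁ := hasSum_mul_pow_of_hasSum_succ h₁ (b := fun n => n * a n)
    (fun n => by simp [derivCoeff]) (by simp)
  have hx₂ := hasSum_mul_pow_of_hasSum_succ h₂ (b := fun n => n * derivCoeff a n)
    (fun n => by simp [derivCoeff]) (by simp)
  have hxx₂ := hasSum_mul_pow_of_hasSum_succ hx₂ (b := fun n => n * (n - 1) * a n)
    (fun n => by simp only [Nat.cast_add_one, add_sub_cancel_right, derivCoeff]; ring) (by simp)
  have hsum := (((hx₂.sub hxx₂).add (h₁.mul_left γ)).sub (hx₁.mul_left (α + β + 1))).sub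
    (h₀.mul_left (α * β))
  have hzero : ∀ n : ℕ, n * derivCoeff a n * x ^ n - n * (n - 1) * a n * x ^ n
      + γ * (derivCoeff a n * x ^ n) - (α + β + 1) * (n * a n * x ^ n)
      - α * β * (a n * x ^ n) = 0 := fun n => by
    simp only [derivCoeff]
    linear_combination x ^ n * hrec n
  simp only [hzero] at hsum
  unfold seriesSum
  linear_combination hsum.unique hasSum_zero

end HypergeometricEquation

section IteratedDeriv

variable {𝕜 : Type*} [NontriviallyNormedField 𝕜]

theorem Set.EqOn.iteratedDeriv_succ {F : Type*} [NormedAddCommGroup F] [NormedSpace 𝕜 F]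
    {s : Set 𝕜} (hs : IsOpen s) {f g g' : 𝕜 → F} {n : ℕ} (h : EqOn (iteratedDeriv n f) g s)
    (hg : ∀ y ∈ s, HasDerivAt g (g' y) y) : EqOn (iteratedDeriv (n + 1) f) g' s := by
  intro y hy
  rw [_root_.iteratedDeriv_succ]
  exact ((hg y hy).congr_of_eventuallyEq (eventually_of_mem (hs.mem_nhds hy) h)).deriv

theorem eqOn_iteratedDeriv_sq {s : Set 𝕜} (hs : IsOpen s) {f f₁ f₂ f₃ : 𝕜 → 𝕜}
    (hf : ∀ y ∈ s, HasDerivAt f (f₁ y) y) (hf₁ : ∀ y ∈ s, HasDerivAt f₁ (f₂ y) y)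
    (hf₂ : ∀ y ∈ s, HasDerivAt f₂ (f₃ y) y) :
    EqOn (iteratedDeriv 1 fun y => f y ^ 2) (fun y => 2 * f y * f₁ y) s ∧
    EqOn (iteratedDeriv 2 fun y => f y ^ 2) (fun y => 2 * f₁ y ^ 2 + 2 * f y * f₂ y) s ∧
    EqOn (iteratedDeriv 3 fun y => f y ^ 2) (fun y => 6 * f₁ y * f₂ y + 2 * f y * f₃ y) s := by
  have h₁ : EqOn (iteratedDeriv 1 fun y => f y ^ 2) (fun y => 2 * f y * f₁ y) s :=
    (Set.eqOn_refl _ s).iteratedDeriv_succ hs fun y hy =>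
      ((hf y hy).pow 2).congr_deriv (by ring)
  have h₂ : EqOn (iteratedDeriv 2 fun y => f y ^ 2)
      (fun y => 2 * f₁ y ^ 2 + 2 * f y * f₂ y) s :=
    h₁.iteratedDeriv_succ hs fun y hy =>
      (((hf y hy).const_mul 2).mul (hf₁ y hy)).congr_deriv (by ring)
  refine ⟨h₁, h₂, h₂.iteratedDeriv_succ hs fun y hy => ?_⟩
  exact ((((hf₁ y hy).pow 2).const_mul 2).add (((hf y hy).const_mul 2).mul (hf₂ y hy))).congr_deriv
    (by ring)

end IteratedDeriv

section HypergeometricSquare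

noncomputable def hypCoeff (n : ℕ) : ℂ :=
  ((∏ k ∈ range n, ((1 : ℂ) / 2 + k)) / n.factorial) ^ 2

theorem hypCoeff_succ (n : ℕ) : hypCoeff (n + 1) = ((n + 1 / 2) / (n + 1)) ^ 2 * hypCoeff n := by
  have hn : (n : ℂ) + 1 ≠ 0 := by exact_mod_cast n.succ_ne_zero
  simp only [hypCoeff, prod_range_succ, Nat.factorial_succ, Nat.cast_mul, Nat.cast_add_one]
  field_simp
  ring

theorem hypCoeff_recurrence (n : ℕ) :
    (n + 1) * (n + 1) * hypCoeff (n + 1) = (n + 1 / 2) * (n + 1 / 2) * hypCoeff n := by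
  have hn : (n : ℂ) + 1 ≠ 0 := by exact_mod_cast n.succ_ne_zero
  rw [hypCoeff_succ]
  field_simp

theorem norm_hypCoeff_le_one (n : ℕ) : ‖hypCoeff n‖ ≤ 1 := by
  induction n with
  | zero => simp [hypCoeff]
  | succ n ih =>
    have hq : ‖((n : ℂ) + 1 / 2) / (n + 1)‖ ≤ 1 := by
      rw [norm_div, ← Nat.cast_add_one, Complex.norm_natCast]
      refine div_le_one_of_le₀ ((norm_add_le _ _).trans ?_) (by positivity)
      norm_num
    rw [hypCoeff_succ, norm_mul, norm_pow]
    exact mul_le_one₀ (pow_le_one₀ (norm_nonneg _) hq) (norm_nonneg _) ih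

theorem polyGrowth_hypCoeff : PolyGrowth hypCoeff :=
  ⟨1, 0, fun n => by simpa using norm_hypCoeff_le_one n⟩

end HypergeometricSquare

theorem selfadjoint_E3_solved_by_hypF_sq (x : ℂ) (hx : ‖x‖ < 1) :
    x^2*(x - 1)^2 * iteratedDeriv 3 uSq x
      + 3*x*(x - 1)*(2*x - 1) * iteratedDeriv 2 uSq x
      + (7*x^2 - 7*x + 1) * deriv uSq x
      + (x - 1/2) * uSq x = 0 := by
  have hD {b : ℕ → ℂ} (hb : PolyGrowth b) :
      ∀ y ∈ Metric.ball (0 : ℂ) 1, HasDerivAt (seriesSum b) (seriesSum (derivCoeff b) y) y :=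
    fun y hy => hb.hasDerivAt_seriesSum (mem_ball_zero_iff.mp hy)
  obtain ⟨h₁, h₂, h₃⟩ := eqOn_iteratedDeriv_sq Metric.isOpen_ball (hD polyGrowth_hypCoeff)
    (hD polyGrowth_hypCoeff.derivCoeff) (hD polyGrowth_hypCoeff.derivCoeff.derivCoeff)
  have hxB : x ∈ Metric.ball (0 : ℂ) 1 := mem_ball_zero_iff.mpr hx
  have ode₀ := seriesSum_hypergeometric_ode polyGrowth_hypCoeff hypCoeff_recurrence hx
  have ode₁ := seriesSum_hypergeometric_ode polyGrowth_hypCoeff.derivCoeff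
    (derivCoeff_recurrence hypCoeff_recurrence) hx
  have huSq : uSq = fun y => seriesSum hypCoeff y ^ 2 := rfl
  rw [← iteratedDeriv_one, huSq, h₁ hxB, h₂ hxB, h₃ hxB]
  linear_combination (-2 * x * (x - 1) * seriesSum hypCoeff x) * ode₁
    - (6 * x * (x - 1) * seriesSum (derivCoeff hypCoeff) x
      + 2 * (2 * x - 1) * seriesSum hypCoeff x) * ode₀
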